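/- Exact closed form of the Poisson series used in the error-floor formula (corrected version of equation (52)): for every integer ν ≥ 1 and every real λ, the series ∑_{m=ν}^∞ e^{−λ} λ^m / (m · (m−ν)!) converges and equals ∑_{k=0}^{ν−1} (−1)^{ν−1+k} ((ν−1)!/k!) λ^k + (−1)^{ν} (ν−1)! e^{−λ}. -/

import Mathlib

/-!
With `t_n(x) = ∑_j x^(n+1+j) / ((n+1+j) j!)` (the power series of `∫₀ˣ s^n e^s ds`), the identity
`1/((j+1)!) - (n+1)/((n+2+j) (j+1)!) = 1/((n+2+j) j!)` is integration by parts on coefficients: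
`t_{n+1}(x) = x^(n+1) e^x - (n+1) t_n(x)`, starting from `t_0(x) = e^x - 1`.
Unrolling the recurrence gives `t_n` in closed form, and multiplying by `e^(-λ)` gives the theorem.
-/

open Finset Nat Real

theorem hasSum_pow_succ_div_factorial_succ (x : ℝ) :
    HasSum (fun j : ℕ => x ^ (j + 1) / ((j + 1)! : ℝ)) (exp x - 1) := by
  have h := NormedSpace.expSeries_div_hasSum_exp x
  rw [← Real.exp_eq_exp_ℝ, ← hasSum_nat_add_iff' 1] at h
  simpa using h

theorem hasSum_pow_add_div_mul_factorial_succ {x a : ℝ} {n : ℕ}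
    (h : HasSum (fun j : ℕ => x ^ (n + 1 + j) / (((n + 1 + j : ℕ) : ℝ) * j !)) a) :
    HasSum (fun j : ℕ => x ^ (n + 2 + j) / (((n + 2 + j : ℕ) : ℝ) * j !))
      (x ^ (n + 1) * exp x - (n + 1) * a) := by
  have hexp := (hasSum_pow_succ_div_factorial_succ x).mul_left (x ^ (n + 1))
  have htail := ((hasSum_nat_add_iff' 1).mpr h).mul_left ((n : ℝ) + 1)
  have hterm : ∀ j : ℕ, x ^ (n + 2 + j) / (((n + 2 + j : ℕ) : ℝ) * j !) =
      x ^ (n + 1) * (x ^ (j + 1) / ((j + 1)! : ℝ)) -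
        (n + 1) * (x ^ (n + 1 + (j + 1)) / (((n + 1 + (j + 1) : ℕ) : ℝ) * ((j + 1)! : ℝ))) := by
    intro j
    have hj : (j ! : ℝ) ≠ 0 := by positivity
    push_cast [Nat.factorial_succ]
    field_simp
    ring
  have hsum : x ^ (n + 1) * exp x - (n + 1) * a = x ^ (n + 1) * (exp x - 1) -
      (n + 1) * (a - ∑ i ∈ range 1, x ^ (n + 1 + i) / (((n + 1 + i : ℕ) : ℝ) * i !)) := by
    simp only [sum_range_one, add_zero, factorial_zero]
    push_cast
    field_simp
    ring
  simpa only [hterm, hsum] using hexp.sub htail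

theorem hasSum_pow_add_div_mul_factorial (x : ℝ) (n : ℕ) :
    HasSum (fun j : ℕ => x ^ (n + 1 + j) / (((n + 1 + j : ℕ) : ℝ) * j !))
      (exp x * ∑ k ∈ range (n + 1), (-1) ^ (n + k) * ((n ! : ℝ) / k !) * x ^ k
        + (-1) ^ (n + 1) * n !) := by
  induction n with
  | zero =>
    convert hasSum_pow_succ_div_factorial_succ x using 1
    · funext j
      rw [zero_add, add_comm, Nat.factorial_succ]
      push_cast
      ring
    · simp only [zero_add, sum_range_one, factorial_zero, cast_one, pow_zero, pow_one, div_one,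
        mul_one]
      ring
  | succ n ih =>
    convert hasSum_pow_add_div_mul_factorial_succ ih using 1
    have hsum : ∑ k ∈ range (n + 1), (-1) ^ (n + 1 + k) * (((n + 1)! : ℝ) / k !) * x ^ k =
        -(n + 1) * ∑ k ∈ range (n + 1), (-1) ^ (n + k) * ((n ! : ℝ) / k !) * x ^ k := by
      rw [mul_sum]
      refine sum_congr rfl fun k _ => ?_
      rw [pow_add, pow_add, Nat.factorial_succ]
      push_cast
      ring
    rw [sum_range_succ, hsum, div_self (by positivity), ← two_mul, pow_mul, Nat.factorial_succ]
    push_cast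
    ring

/-- Exact closed form of the Poisson series in the error-floor formula (corrected
equation (52)): for every integer `ν ≥ 1` and every real `λ`, the series
`∑_{m=ν}^∞ e^{−λ} λ^m / (m (m−ν)!)` converges (written with the index shift
`m = ν + j`) and equals
`∑_{k=0}^{ν−1} (−1)^{ν−1+k} ((ν−1)!/k!) λ^k + (−1)^ν (ν−1)! e^{−λ}`. -/
theorem poisson_error_floor_series (ν : ℕ) (hν : 1 ≤ ν) (lam : ℝ) :
    HasSum (fun j : ℕ =>
        Real.exp (-lam) * lam ^ (ν + j) / (((ν + j : ℕ) : ℝ) * (Nat.factorial j : ℝ)))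
      ((∑ k ∈ Finset.range ν, (-1 : ℝ) ^ (ν - 1 + k) *
          ((Nat.factorial (ν - 1) : ℝ) / (Nat.factorial k : ℝ)) * lam ^ k)
        + (-1 : ℝ) ^ ν * (Nat.factorial (ν - 1) : ℝ) * Real.exp (-lam)) := by
  obtain ⟨n, rfl⟩ : ∃ n, ν = n + 1 := ⟨ν - 1, by omega⟩
  rw [add_tsub_cancel_right]
  have hval : ∀ s c : ℝ, exp (-lam) * (exp lam * s + c) = s + c * exp (-lam) := fun s c => by
    rw [mul_add, ← mul_assoc, ← exp_add, neg_add_cancel, exp_zero, one_mul, mul_comm]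
  simpa only [mul_div_assoc, hval, mul_assoc] using
    (hasSum_pow_add_div_mul_factorial lam n).mul_left (exp (-lam))
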